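/- Let ℓ ≥ 1 and let M₁, M₂, M₃ be real symmetric ℓ×ℓ matrices. If the set B(M₁,M₂,M₃) is nonempty, then it contains an element of rank at most φ(ℓ). -/

import Mathlib

open Matrix

noncomputable section

/-- Feasibility predicate for the set in Definition of `φ`. -/
def phiFeas (l : ℕ) (U : Matrix (Fin (2*l)) (Fin l) ℝ)
    (M : Matrix (Fin l) (Fin l) ℝ)
    (Y : Matrix (Fin (2*l)) (Fin (2*l)) ℝ) : Prop :=
  Y.PosSemidef ∧ Uᵀ * Y * U = M ∧
  (∀ i j : Fin l, Y ⟨(i : ℕ), by omega⟩ ⟨(j : ℕ), by omega⟩ = if i = j then (1:ℝ) else 0) ∧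
  (∀ i j : Fin l, Y ⟨l + (i : ℕ), by omega⟩ ⟨l + (j : ℕ), by omega⟩ = if i = j then (1:ℝ) else 0)

/-- `φ(ℓ)`. -/
def phi (l : ℕ) : ℕ :=
  sInf {k : ℕ |
    ∀ (U : Matrix (Fin (2*l)) (Fin l) ℝ) (M : Matrix (Fin l) (Fin l) ℝ),
      M.IsSymm → (∃ Y, phiFeas l U M Y) → ∃ Y, phiFeas l U M Y ∧ Y.rank ≤ k}

/-- The `3ℓ×ℓ` block matrix `[I_ℓ; I_ℓ; −I_ℓ]`. -/
def Wmat (l : ℕ) : Matrix (Fin (3*l)) (Fin l) ℝ :=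
  Matrix.of fun i j =>
    (if (i : ℕ) = (j : ℕ) then 1 else 0) + (if (i : ℕ) = l + (j : ℕ) then 1 else 0)
      - (if (i : ℕ) = 2*l + (j : ℕ) then 1 else 0)

/-- Membership in the set `B(M₁,M₂,M₃)`. -/
def Bset (l : ℕ) (M1 M2 M3 : Matrix (Fin l) (Fin l) ℝ)
    (X : Matrix (Fin (3*l)) (Fin (3*l)) ℝ) : Prop :=
  X.PosSemidef ∧
  (∀ i j : Fin l, X ⟨(i : ℕ), by omega⟩ ⟨(j : ℕ), by omega⟩ = M1 i j) ∧
  (∀ i j : Fin l, X ⟨l + (i : ℕ), by omega⟩ ⟨l + (j : ℕ), by omega⟩ = M2 i j) ∧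
  (∀ i j : Fin l, X ⟨2*l + (i : ℕ), by omega⟩ ⟨2*l + (j : ℕ), by omega⟩ = M3 i j) ∧
  (Wmat l)ᵀ * X * (Wmat l) = 0

/-!
For positive semidefinite `X`, the condition `Wᵀ X W = 0` says that the third block of a Gram
representation `X = Gram(x₁, x₂, x₃)` is `x₃ = x₁ + x₂`. Hence `X = V Q Vᵀ`, where `Q` is the
`2ℓ × 2ℓ` leading block, `V = [I 0; 0 I; I I]`, and `M₃ = Jᵀ Q J` with `J = [I; I]`.
Writing `Q = S Z S` with `S = diag(√M₁, √M₂)` and `Z` positive semidefinite with identity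
diagonal blocks (built from the pseudo-inverse of `S`), the constraint on `Z` becomes
`Uᵀ Z U = M₃` for `U = S J`, an instance of the problem defining `φ(ℓ)`. A solution `Z'` of rank
at most `φ(ℓ)` gives back `V (S Z' S) Vᵀ ∈ B(M₁, M₂, M₃)`, whose rank is at most that of `Z'`.
-/

namespace Matrix

variable {m n k : Type*}

theorem PosSemidef.transpose_eq {Q : Matrix n n ℝ} (hQ : Q.PosSemidef) : Qᵀ = Q := by
  simpa [conjTranspose_eq_transpose_of_trivial] using hQ.isHermitian.eq

variable [Fintype m] [Fintype n] [Fintype k]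

theorem PosSemidef.transpose_mul_mul_same {Q : Matrix n n ℝ} (hQ : Q.PosSemidef)
    (B : Matrix n m ℝ) : (Bᵀ * Q * B).PosSemidef := by
  simpa [conjTranspose_eq_transpose_of_trivial] using hQ.conjTranspose_mul_mul_same B

theorem PosSemidef.mul_mul_transpose_same {Q : Matrix n n ℝ} (hQ : Q.PosSemidef)
    (B : Matrix m n ℝ) : (B * Q * Bᵀ).PosSemidef := by
  simpa [conjTranspose_eq_transpose_of_trivial] using hQ.mul_mul_conjTranspose_same B

theorem rank_mul_mul_le {p q R : Type*} [Fintype q] [CommRing R] [StrongRankCondition R]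
    (A : Matrix p m R) (B : Matrix m n R) (C : Matrix n q R) : (A * B * C).rank ≤ B.rank :=
  (rank_mul_le_left _ _).trans (rank_mul_le_right _ _)

theorem transpose_cfc [DecidableEq n] (f : ℝ → ℝ) (A : Matrix n n ℝ) :
    (cfc f A)ᵀ = cfc f A := by
  rw [← conjTranspose_eq_transpose_of_trivial, ← star_eq_conjTranspose]
  exact (cfc_predicate f A : IsSelfAdjoint _).star_eq

theorem cfc_mul_cfc [DecidableEq n] (f g : ℝ → ℝ) (A : Matrix n n ℝ) :
    cfc f A * cfc g A = cfc (fun x => f x * g x) A :=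
  (cfc_mul f g A (A.finite_real_spectrum.continuousOn f)
    (A.finite_real_spectrum.continuousOn g)).symm

/-- `R` is a symmetric square root of `A` and `P` a pseudo-inverse of `R`, so that `R * P` is the
orthogonal projection onto the range of `A`. -/
structure IsSqrtPinv (A R P : Matrix n n ℝ) : Prop where
  transpose_sqrt : Rᵀ = R
  transpose_pinv : Pᵀ = P
  sqrt_mul_sqrt : R * R = A
  pinv_mul_mul_pinv : P * A * P = R * P
  pinv_mul_sqrt : P * R = R * P
  sqrt_mul_pinv_mul_sqrt : R * P * R = R

namespace IsSqrtPinv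

variable {A R P : Matrix n n ℝ}

theorem mul_one_sub_eq_zero [DecidableEq n] (h : IsSqrtPinv A R P) : A * (1 - R * P) = 0 := by
  rw [Matrix.mul_sub, Matrix.mul_one, sub_eq_zero, ← h.sqrt_mul_sqrt, ← h.pinv_mul_sqrt,
    Matrix.mul_assoc, ← Matrix.mul_assoc R P R, h.sqrt_mul_pinv_mul_sqrt]

theorem transpose_one_sub [DecidableEq n] (h : IsSqrtPinv A R P) :
    (1 - R * P)ᵀ = 1 - R * P := by
  rw [transpose_sub, transpose_one, transpose_mul, h.transpose_sqrt, h.transpose_pinv,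
    h.pinv_mul_sqrt]

theorem one_sub_mul_one_sub [DecidableEq n] (h : IsSqrtPinv A R P) :
    (1 - R * P) * (1 - R * P) = 1 - R * P := by
  rw [sub_mul, mul_sub, mul_sub, Matrix.one_mul, Matrix.mul_one, Matrix.one_mul,
    ← Matrix.mul_assoc, h.sqrt_mul_pinv_mul_sqrt]
  abel

theorem posSemidef_one_sub [DecidableEq n] (h : IsSqrtPinv A R P) :
    (1 - R * P).PosSemidef := by
  have := posSemidef_conjTranspose_mul_self (1 - R * P)
  rwa [conjTranspose_eq_transpose_of_trivial, h.transpose_one_sub, h.one_sub_mul_one_sub] at this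

theorem fromBlocks {A₁ R₁ P₁ : Matrix m m ℝ} {A₂ R₂ P₂ : Matrix k k ℝ}
    (h₁ : IsSqrtPinv A₁ R₁ P₁) (h₂ : IsSqrtPinv A₂ R₂ P₂) :
    IsSqrtPinv (fromBlocks A₁ 0 0 A₂) (fromBlocks R₁ 0 0 R₂) (fromBlocks P₁ 0 0 P₂) where
  transpose_sqrt := by simp [fromBlocks_transpose, h₁.transpose_sqrt, h₂.transpose_sqrt]
  transpose_pinv := by simp [fromBlocks_transpose, h₁.transpose_pinv, h₂.transpose_pinv]
  sqrt_mul_sqrt := by simp [fromBlocks_multiply, h₁.sqrt_mul_sqrt, h₂.sqrt_mul_sqrt]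
  pinv_mul_mul_pinv := by
    simp [fromBlocks_multiply, h₁.pinv_mul_mul_pinv, h₂.pinv_mul_mul_pinv]
  pinv_mul_sqrt := by simp [fromBlocks_multiply, h₁.pinv_mul_sqrt, h₂.pinv_mul_sqrt]
  sqrt_mul_pinv_mul_sqrt := by
    simp [fromBlocks_multiply, h₁.sqrt_mul_pinv_mul_sqrt, h₂.sqrt_mul_pinv_mul_sqrt]

end IsSqrtPinv

theorem PosSemidef.exists_isSqrtPinv {A : Matrix n n ℝ} (hA : A.PosSemidef) :
    ∃ R P, IsSqrtPinv A R P := by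
  classical
  have hA' : IsSelfAdjoint A := hA.isHermitian
  have hspec : ∀ x ∈ spectrum ℝ A, 0 ≤ x :=
    (posSemidef_iff_isHermitian_and_spectrum_nonneg.mp hA).2
  have hmulA (f : ℝ → ℝ) : cfc f A * A = cfc (fun x => f x * x) A := by
    rw [← cfc_mul_cfc, cfc_id' ℝ A hA']
  -- `(√0)⁻¹ = 0` in `ℝ`, which makes `P` the pseudo-inverse of `R` rather than an inverse.
  refine ⟨cfc Real.sqrt A, cfc (fun x => (Real.sqrt x)⁻¹) A,
    transpose_cfc _ _, transpose_cfc _ _, ?_, ?_, ?_, ?_⟩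
  · rw [cfc_mul_cfc]
    conv_rhs => rw [← cfc_id' ℝ A hA']
    exact cfc_congr fun x hx => Real.mul_self_sqrt (hspec x hx)
  · rw [hmulA, cfc_mul_cfc, cfc_mul_cfc]
    refine cfc_congr fun x hx => ?_
    rcases (hspec x hx).eq_or_lt with hx0 | hx0
    · simp [← hx0]
    · have : Real.sqrt x ≠ 0 := (Real.sqrt_pos.mpr hx0).ne'
      nth_rw 2 [← Real.mul_self_sqrt hx0.le]
      field_simp
  · rw [cfc_mul_cfc, cfc_mul_cfc]
    exact cfc_congr fun x _ => mul_comm _ _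
  · rw [cfc_mul_cfc, cfc_mul_cfc]
    refine cfc_congr fun x _ => ?_
    rcases eq_or_ne (Real.sqrt x) 0 with hx0 | hx0
    · simp [hx0]
    · field_simp

theorem PosSemidef.mul_eq_zero_of_transpose_mul_mul_eq_zero {Y : Matrix m m ℝ}
    (hY : Y.PosSemidef) {W : Matrix m n ℝ} (h : Wᵀ * Y * W = 0) : Y * W = 0 := by
  obtain ⟨R, P, hR⟩ := hY.exists_isSqrtPinv
  have hRW : (R * W)ᴴ * (R * W) = 0 := by
    rw [conjTranspose_eq_transpose_of_trivial, transpose_mul, hR.transpose_sqrt,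
      Matrix.mul_assoc, ← Matrix.mul_assoc R, hR.sqrt_mul_sqrt, ← Matrix.mul_assoc, h]
  have : R * W = 0 := trace_conjTranspose_mul_self_eq_zero_iff.mp (by rw [hRW, trace_zero])
  rw [← hR.sqrt_mul_sqrt, Matrix.mul_assoc, this, Matrix.mul_zero]

theorem toBlocks₁₁_fromBlocks_mul_mul_fromBlocks {α : Type*} [Semiring α]
    (A C : Matrix m m α) (B D : Matrix k k α) (Q : Matrix (m ⊕ k) (m ⊕ k) α) :
    (fromBlocks A 0 0 B * Q * fromBlocks C 0 0 D).toBlocks₁₁ = A * Q.toBlocks₁₁ * C := by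
  rw [← fromBlocks_toBlocks Q]
  simp [fromBlocks_multiply]

theorem toBlocks₂₂_fromBlocks_mul_mul_fromBlocks {α : Type*} [Semiring α]
    (A C : Matrix m m α) (B D : Matrix k k α) (Q : Matrix (m ⊕ k) (m ⊕ k) α) :
    (fromBlocks A 0 0 B * Q * fromBlocks C 0 0 D).toBlocks₂₂ = B * Q.toBlocks₂₂ * D := by
  rw [← fromBlocks_toBlocks Q]
  simp [fromBlocks_multiply]

theorem trace_mul_fromBlocks_zero {α : Type*} [Semiring α] (Q : Matrix (m ⊕ k) (m ⊕ k) α)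
    (A : Matrix m m α) (D : Matrix k k α) :
    trace (Q * fromBlocks A 0 0 D) = trace (Q.toBlocks₁₁ * A) + trace (Q.toBlocks₂₂ * D) := by
  simp [trace, mul_apply, Fintype.sum_sum_type, toBlocks₁₁, toBlocks₂₂]

theorem PosSemidef.exists_fromBlocks_mul_mul_fromBlocks_eq [DecidableEq m] [DecidableEq k]
    {Q : Matrix (m ⊕ k) (m ⊕ k) ℝ} (hQ : Q.PosSemidef) :
    ∃ (R₁ : Matrix m m ℝ) (R₂ : Matrix k k ℝ) (Z : Matrix (m ⊕ k) (m ⊕ k) ℝ),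
      R₁ᵀ = R₁ ∧ R₂ᵀ = R₂ ∧ Z.PosSemidef ∧ Z.toBlocks₁₁ = 1 ∧ Z.toBlocks₂₂ = 1 ∧
      fromBlocks R₁ 0 0 R₂ * Z * fromBlocks R₁ 0 0 R₂ = Q := by
  obtain ⟨R₁, P₁, h₁⟩ : ∃ R P, IsSqrtPinv Q.toBlocks₁₁ R P :=
    (hQ.submatrix Sum.inl).exists_isSqrtPinv
  obtain ⟨R₂, P₂, h₂⟩ : ∃ R P, IsSqrtPinv Q.toBlocks₂₂ R P :=
    (hQ.submatrix Sum.inr).exists_isSqrtPinv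
  have h := h₁.fromBlocks h₂
  set S := fromBlocks R₁ 0 0 R₂
  set S' := fromBlocks P₁ 0 0 P₂
  have hK : 1 - S * S' = fromBlocks (1 - R₁ * P₁) 0 0 (1 - R₂ * P₂) := by
    simp [S, S', fromBlocks_multiply, ← fromBlocks_one, sub_eq_add_neg, fromBlocks_neg,
      fromBlocks_add]
  -- `K = 1 - S S'` annihilates the diagonal blocks of `Q`, so the PSD matrix `Kᵀ Q K` has
  -- trace zero, and then `Q K = 0`.
  have hQK : Q * (1 - S * S') = 0 := by
    apply hQ.mul_eq_zero_of_transpose_mul_mul_eq_zero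
    rw [← (hQ.transpose_mul_mul_same (1 - S * S')).trace_eq_zero_iff, trace_mul_cycle,
      h.transpose_one_sub, h.one_sub_mul_one_sub, trace_mul_comm, hK, trace_mul_fromBlocks_zero,
      h₁.mul_one_sub_eq_zero, h₂.mul_one_sub_eq_zero]
    simp
  have hKQ : (1 - S * S') * Q = 0 := by
    rw [← h.transpose_one_sub, ← hQ.transpose_eq, ← transpose_mul, hQK, transpose_zero]
  have hproj : S * S' * Q * (S' * S) = Q := by
    rw [sub_mul, Matrix.one_mul, sub_eq_zero] at hKQ
    rw [mul_sub, Matrix.mul_one, sub_eq_zero, ← h.pinv_mul_sqrt] at hQK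
    rw [← hKQ, ← hQK]
  have hSKS : S * (1 - S * S') * S = 0 := by
    rw [mul_sub, Matrix.mul_one, sub_mul, Matrix.mul_assoc S (S * S') S,
      h.sqrt_mul_pinv_mul_sqrt, sub_self]
  refine ⟨R₁, R₂, S' * Q * S' + (1 - S * S'), h₁.transpose_sqrt, h₂.transpose_sqrt,
    ?_, ?_, ?_, ?_⟩
  · have := hQ.transpose_mul_mul_same S'
    rw [h.transpose_pinv] at this
    exact this.add h.posSemidef_one_sub
  · rw [← fromBlocks_toBlocks Q, hK]
    simp [S', fromBlocks_multiply, fromBlocks_add, h₁.pinv_mul_mul_pinv]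
  · rw [← fromBlocks_toBlocks Q, hK]
    simp [S', fromBlocks_multiply, fromBlocks_add, h₂.pinv_mul_mul_pinv]
  · show S * _ * S = Q
    rw [Matrix.mul_add, Matrix.add_mul, hSKS, add_zero]
    conv_rhs => rw [← hproj]
    simp only [Matrix.mul_assoc]

end Matrix

section Blocks

variable {n : Type*} [Fintype n] [DecidableEq n]

def Jmat (n : Type*) [DecidableEq n] : Matrix (n ⊕ n) n ℝ := fromRows 1 1

def Wblock (n : Type*) [DecidableEq n] : Matrix ((n ⊕ n) ⊕ n) n ℝ := fromRows (Jmat n) (-1)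

def Vmat (n : Type*) [DecidableEq n] : Matrix ((n ⊕ n) ⊕ n) (n ⊕ n) ℝ := fromRows 1 (Jmat n)ᵀ

def IsBsetBlock (M₁ M₂ M₃ : Matrix n n ℝ) (X : Matrix ((n ⊕ n) ⊕ n) ((n ⊕ n) ⊕ n) ℝ) :
    Prop :=
  X.PosSemidef ∧ X.toBlocks₁₁.toBlocks₁₁ = M₁ ∧ X.toBlocks₁₁.toBlocks₂₂ = M₂ ∧
    X.toBlocks₂₂ = M₃ ∧ (Wblock n)ᵀ * X * Wblock n = 0

def IsPhiFeasBlock (U : Matrix (n ⊕ n) n ℝ) (M : Matrix n n ℝ)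
    (Z : Matrix (n ⊕ n) (n ⊕ n) ℝ) : Prop :=
  Z.PosSemidef ∧ Uᵀ * Z * U = M ∧ Z.toBlocks₁₁ = 1 ∧ Z.toBlocks₂₂ = 1

theorem Vmat_transpose_mul_Wblock : (Vmat n)ᵀ * Wblock n = 0 := by
  simp [Vmat, Wblock, transpose_fromRows, fromCols_mul_fromRows]

theorem toBlocks₁₁_Vmat_mul_mul_transpose (Q : Matrix (n ⊕ n) (n ⊕ n) ℝ) :
    (Vmat n * Q * (Vmat n)ᵀ).toBlocks₁₁ = Q := by
  simp [Vmat, transpose_fromRows, fromRows_mul]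

theorem toBlocks₂₂_Vmat_mul_mul_transpose (Q : Matrix (n ⊕ n) (n ⊕ n) ℝ) :
    (Vmat n * Q * (Vmat n)ᵀ).toBlocks₂₂ = (Jmat n)ᵀ * Q * Jmat n := by
  simp [Vmat, transpose_fromRows, fromRows_mul]

theorem fromRows_eq_fromBlocks_mul_Jmat (R₁ R₂ : Matrix n n ℝ) :
    fromRows R₁ R₂ = fromBlocks R₁ 0 0 R₂ * Jmat n := by
  simp [Jmat, fromBlocks_mul_fromRows]

theorem eq_Vmat_mul_toBlocks₁₁_mul_transpose {X : Matrix ((n ⊕ n) ⊕ n) ((n ⊕ n) ⊕ n) ℝ}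
    (hX : X.PosSemidef) (hW : (Wblock n)ᵀ * X * Wblock n = 0) :
    X = Vmat n * X.toBlocks₁₁ * (Vmat n)ᵀ := by
  have hXW := hX.mul_eq_zero_of_transpose_mul_mul_eq_zero hW
  have hXt := hX.transpose_eq
  rw [← fromBlocks_toBlocks X] at hXW hXt ⊢
  simp only [Wblock, fromBlocks_mul_fromRows, fromBlocks_transpose, fromBlocks_inj] at hXW hXt
  obtain ⟨-, h₂₁, -, -⟩ := hXt
  rw [← fromRows_zero, fromRows_inj.eq_iff, Matrix.mul_neg, Matrix.mul_neg,
    Matrix.mul_one, Matrix.mul_one, add_neg_eq_zero, add_neg_eq_zero] at hXW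
  obtain ⟨h₁₂, h₂₂⟩ := hXW
  have hQ : X.toBlocks₁₁.PosSemidef := hX.submatrix Sum.inl
  have h₂₁' : X.toBlocks₂₁ = (Jmat n)ᵀ * X.toBlocks₁₁ := by
    rw [← transpose_transpose X.toBlocks₂₁, h₂₁, ← h₁₂, transpose_mul, hQ.transpose_eq]
  rw [toBlocks_fromBlocks₁₁, ← h₂₂, h₂₁', ← h₁₂]
  simp [Vmat, fromRows_mul, transpose_fromRows]

variable {M₁ M₂ M₃ : Matrix n n ℝ}

theorem IsBsetBlock.exists_isPhiFeasBlock {X : Matrix ((n ⊕ n) ⊕ n) ((n ⊕ n) ⊕ n) ℝ}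
    (hX : IsBsetBlock M₁ M₂ M₃ X) :
    ∃ R₁ R₂ Z, R₁ᵀ = R₁ ∧ R₂ᵀ = R₂ ∧ R₁ * R₁ = M₁ ∧ R₂ * R₂ = M₂ ∧
      IsPhiFeasBlock (fromRows R₁ R₂) M₃ Z := by
  obtain ⟨hX, h₁, h₂, h₃, hW⟩ := hX
  have hQ : X.toBlocks₁₁.PosSemidef := hX.submatrix Sum.inl
  obtain ⟨R₁, R₂, Z, hR₁, hR₂, hZ, hZ₁, hZ₂, hQ⟩ := hQ.exists_fromBlocks_mul_mul_fromBlocks_eq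
  refine ⟨R₁, R₂, Z, hR₁, hR₂, ?_, ?_, hZ, ?_, hZ₁, hZ₂⟩
  · rw [← h₁, ← hQ, toBlocks₁₁_fromBlocks_mul_mul_fromBlocks, hZ₁, Matrix.mul_one]
  · rw [← h₂, ← hQ, toBlocks₂₂_fromBlocks_mul_mul_fromBlocks, hZ₂, Matrix.mul_one]
  · rw [← h₃, eq_Vmat_mul_toBlocks₁₁_mul_transpose hX hW, toBlocks₂₂_Vmat_mul_mul_transpose,
      ← hQ, fromRows_eq_fromBlocks_mul_Jmat, transpose_mul, fromBlocks_transpose, hR₁, hR₂,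
      transpose_zero]
    simp only [Matrix.mul_assoc]

theorem IsPhiFeasBlock.exists_isBsetBlock_rank_le {R₁ R₂ : Matrix n n ℝ}
    {Z : Matrix (n ⊕ n) (n ⊕ n) ℝ} (hR₁ : R₁ᵀ = R₁) (hR₂ : R₂ᵀ = R₂) (h₁ : R₁ * R₁ = M₁)
    (h₂ : R₂ * R₂ = M₂) (hZ : IsPhiFeasBlock (fromRows R₁ R₂) M₃ Z) :
    ∃ X, IsBsetBlock M₁ M₂ M₃ X ∧ X.rank ≤ Z.rank := by
  obtain ⟨hZ, h₃, hZ₁, hZ₂⟩ := hZ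
  set S := fromBlocks R₁ 0 0 R₂
  have hS : Sᵀ = S := by rw [fromBlocks_transpose, hR₁, hR₂, transpose_zero]
  refine ⟨Vmat n * (S * Z * S) * (Vmat n)ᵀ, ⟨?_, ?_, ?_, ?_, ?_⟩,
    (rank_mul_mul_le _ _ _).trans (rank_mul_mul_le _ _ _)⟩
  · have := hZ.transpose_mul_mul_same S
    rw [hS] at this
    exact this.mul_mul_transpose_same _
  · rw [toBlocks₁₁_Vmat_mul_mul_transpose, toBlocks₁₁_fromBlocks_mul_mul_fromBlocks, hZ₁,
      Matrix.mul_one, h₁]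
  · rw [toBlocks₁₁_Vmat_mul_mul_transpose, toBlocks₂₂_fromBlocks_mul_mul_fromBlocks, hZ₂,
      Matrix.mul_one, h₂]
  · rw [toBlocks₂₂_Vmat_mul_mul_transpose, ← h₃, fromRows_eq_fromBlocks_mul_Jmat, transpose_mul,
      hS]
    simp only [S, Matrix.mul_assoc]
  · simp only [Matrix.mul_assoc, Vmat_transpose_mul_Wblock, Matrix.mul_zero]

end Blocks

section FinIndexing

variable {l : ℕ}

def finSumFinEquivTwoMul (l : ℕ) : Fin l ⊕ Fin l ≃ Fin (2 * l) :=
  finSumFinEquiv.trans (finCongr (two_mul l).symm)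

def finSumFinEquivThreeMul (l : ℕ) : (Fin l ⊕ Fin l) ⊕ Fin l ≃ Fin (3 * l) :=
  ((finSumFinEquivTwoMul l).sumCongr (Equiv.refl _)).trans
    (finSumFinEquiv.trans (finCongr (by omega)))

@[simp]
theorem finSumFinEquivTwoMul_inl (i : Fin l) :
    finSumFinEquivTwoMul l (.inl i) = ⟨i, by omega⟩ := by
  ext; simp [finSumFinEquivTwoMul]

@[simp]
theorem finSumFinEquivTwoMul_inr (i : Fin l) :
    finSumFinEquivTwoMul l (.inr i) = ⟨l + i, by omega⟩ := by
  ext; simp [finSumFinEquivTwoMul, add_comm]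

@[simp]
theorem finSumFinEquivThreeMul_inl (i : Fin l ⊕ Fin l) :
    finSumFinEquivThreeMul l (.inl i) = ⟨finSumFinEquivTwoMul l i, by omega⟩ := by
  ext; simp [finSumFinEquivThreeMul]

@[simp]
theorem finSumFinEquivThreeMul_inr (i : Fin l) :
    finSumFinEquivThreeMul l (.inr i) = ⟨2 * l + i, by omega⟩ := by
  ext; simp [finSumFinEquivThreeMul]

theorem phiFeas_iff (U : Matrix (Fin (2 * l)) (Fin l) ℝ) (M : Matrix (Fin l) (Fin l) ℝ)
    (Y : Matrix (Fin (2 * l)) (Fin (2 * l)) ℝ) :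
    phiFeas l U M Y ↔ IsPhiFeasBlock (U.submatrix (finSumFinEquivTwoMul l) id) M
      (Y.submatrix (finSumFinEquivTwoMul l) (finSumFinEquivTwoMul l)) := by
  rw [phiFeas, IsPhiFeasBlock, posSemidef_submatrix_equiv, transpose_submatrix,
    submatrix_mul_equiv, submatrix_mul_equiv, submatrix_id_id]
  simp [← Matrix.ext_iff, one_apply, toBlocks₁₁, toBlocks₂₂]

theorem Wmat_submatrix :
    (Wmat l).submatrix (finSumFinEquivThreeMul l) id = Wblock (Fin l) := by
  ext ((i | i) | i) j <;> simp [Wmat, Wblock, Jmat, one_apply, Fin.ext_iff] <;>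
    split_ifs <;> first | omega | norm_num

theorem Bset_iff (M₁ M₂ M₃ : Matrix (Fin l) (Fin l) ℝ)
    (X : Matrix (Fin (3 * l)) (Fin (3 * l)) ℝ) :
    Bset l M₁ M₂ M₃ X ↔ IsBsetBlock M₁ M₂ M₃
      (X.submatrix (finSumFinEquivThreeMul l) (finSumFinEquivThreeMul l)) := by
  rw [Bset, IsBsetBlock, posSemidef_submatrix_equiv, ← Wmat_submatrix, transpose_submatrix,
    submatrix_mul_equiv, submatrix_mul_equiv, submatrix_id_id]
  simp [← Matrix.ext_iff, toBlocks₁₁, toBlocks₂₂]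

end FinIndexing

theorem exists_phiFeas_rank_le_phi {l : ℕ} {U : Matrix (Fin (2 * l)) (Fin l) ℝ}
    {M : Matrix (Fin l) (Fin l) ℝ} (hM : M.IsSymm) (h : ∃ Y, phiFeas l U M Y) :
    ∃ Y, phiFeas l U M Y ∧ Y.rank ≤ phi l :=
  Nat.sInf_mem (s := {k | ∀ U M, M.IsSymm → (∃ Y, phiFeas l U M Y) →
      ∃ Y, phiFeas l U M Y ∧ Y.rank ≤ k})
    ⟨2 * l, fun _ _ _ ⟨Y, hY⟩ => ⟨Y, hY, (rank_le_card_width Y).trans (by simp)⟩⟩ U M hM h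

theorem IsPhiFeasBlock.exists_rank_le_phi {l : ℕ} {U : Matrix (Fin l ⊕ Fin l) (Fin l) ℝ}
    {M : Matrix (Fin l) (Fin l) ℝ} {Z : Matrix (Fin l ⊕ Fin l) (Fin l ⊕ Fin l) ℝ}
    (hZ : IsPhiFeasBlock U M Z) : ∃ Z', IsPhiFeasBlock U M Z' ∧ Z'.rank ≤ phi l := by
  have hM : M.IsSymm := by
    rw [← hZ.2.1, IsSymm, transpose_mul, transpose_mul, transpose_transpose, hZ.1.transpose_eq,
      Matrix.mul_assoc]
  let e := finSumFinEquivTwoMul l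
  obtain ⟨Y, hY, hrank⟩ := exists_phiFeas_rank_le_phi (U := U.submatrix e.symm id) hM
    ⟨Z.submatrix e.symm e.symm, by simpa [phiFeas_iff, e] using hZ⟩
  rw [phiFeas_iff] at hY
  exact ⟨_, by simpa [e] using hY, (rank_submatrix Y _ _).trans_le hrank⟩

theorem Bset_exists_low_rank (l : ℕ)
    (M1 M2 M3 : Matrix (Fin l) (Fin l) ℝ)
    (h : ∃ X, Bset l M1 M2 M3 X) :
    ∃ X, Bset l M1 M2 M3 X ∧ X.rank ≤ phi l := by
  obtain ⟨X, hX⟩ := h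
  rw [Bset_iff] at hX
  obtain ⟨R₁, R₂, Z, hR₁, hR₂, h₁, h₂, hZ⟩ := hX.exists_isPhiFeasBlock
  obtain ⟨Z', hZ', hrank⟩ := hZ.exists_rank_le_phi
  obtain ⟨X', hX', hrank'⟩ := hZ'.exists_isBsetBlock_rank_le hR₁ hR₂ h₁ h₂
  let e := finSumFinEquivThreeMul l
  refine ⟨X'.submatrix e.symm e.symm, by simpa [Bset_iff, e] using hX', ?_⟩
  rw [rank_submatrix]
  exact hrank'.trans hrank
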